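/- For ξ ~ Binomial(3,p) and the p.g.f. G(s) = (3p^3/32)s^3 + (2p^2/3 − 37p^3/96)s^2 + (13p^3/24 − 5p^2/3 + 3p/2)s + (−p^3/4 + p^2 − 3p/2 + 1), the inequality G'(1)·G''(s) − G'(s)·G''(1) ≥ 0 holds for all s ∈ [0,1] and all p ∈ [0,1], and is implied by 335p^2 − 3424p + 4304 > 0, which holds for all p ∈ [0,1]. -/

import Mathlib

/-!
For a cubic `G(s) = a s³ + b s² + c s + d` the quantity `G'(1) G''(s) - G'(s) G''(1)` is a
quadratic in `s` vanishing at `s = 1`, so it factors as `(1 - s) (α s + β)` with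
`α = 6a(3a + b)` and `β = 6ab + 4b² - 6ac`. For the coefficients of `Gb3 p` this linear factor is
`p⁴ (18 p (96 - 15 p) s + 335 p² - 3424 p + 4304) / 4608`, which is nonnegative on `[0,1]²`
because the quadratic in `p` is at least `4304 - 3424 > 0` there.
-/

/-- The p.g.f. of the offspring law of the branching process associated to the
Maki–Thompson model on a Galton–Watson tree with `Binomial(3,p)` offspring. -/
noncomputable def Gb3 (p s : ℝ) : ℝ :=
  (3 * p ^ 3 / 32) * s ^ 3 + (2 * p ^ 2 / 3 - 37 * p ^ 3 / 96) * s ^ 2 +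
    (13 * p ^ 3 / 24 - 5 * p ^ 2 / 3 + 3 * p / 2) * s + (-p ^ 3 / 4 + p ^ 2 - 3 * p / 2 + 1)

theorem hasDerivAt_quadratic (a b c x : ℝ) :
    HasDerivAt (fun s : ℝ => a * s ^ 2 + b * s + c) (2 * a * x + b) x :=
  ((((hasDerivAt_pow 2 x).const_mul a).add ((hasDerivAt_id' x).const_mul b)).add_const c).congr_deriv
    (by push_cast; ring)

theorem hasDerivAt_cubic (a b c d x : ℝ) :
    HasDerivAt (fun s : ℝ => a * s ^ 3 + b * s ^ 2 + c * s + d) (3 * a * x ^ 2 + 2 * b * x + c) x :=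
  ((((hasDerivAt_pow 3 x).const_mul a).add ((hasDerivAt_pow 2 x).const_mul b)).add
    ((hasDerivAt_id' x).const_mul c)).add_const d |>.congr_deriv (by push_cast; ring)

theorem deriv_cubic (a b c d : ℝ) :
    deriv (fun s : ℝ => a * s ^ 3 + b * s ^ 2 + c * s + d) =
      fun s => 3 * a * s ^ 2 + 2 * b * s + c :=
  funext fun x => (hasDerivAt_cubic a b c d x).deriv

theorem deriv_deriv_cubic (a b c d : ℝ) :
    deriv (deriv fun s : ℝ => a * s ^ 3 + b * s ^ 2 + c * s + d) = fun s => 6 * a * s + 2 * b := by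
  funext x
  rw [deriv_cubic, (hasDerivAt_quadratic _ _ _ x).deriv]
  ring

theorem deriv_cross_cubic_eq {G : ℝ → ℝ} {a b c d : ℝ}
    (hG : G = fun s => a * s ^ 3 + b * s ^ 2 + c * s + d) (s : ℝ) :
    deriv G 1 * deriv (deriv G) s - deriv G s * deriv (deriv G) 1 =
      (1 - s) * (6 * a * (3 * a + b) * s + (6 * a * b + 4 * b ^ 2 - 6 * a * c)) := by
  subst hG
  rw [deriv_deriv_cubic, deriv_cubic]
  ring

theorem Gb3_deriv_cross_eq (p s : ℝ) :
    deriv (Gb3 p) 1 * deriv (deriv (Gb3 p)) s - deriv (Gb3 p) s * deriv (deriv (Gb3 p)) 1 =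
      (1 - s) * p ^ 4 * (18 * p * (96 - 15 * p) * s + (335 * p ^ 2 - 3424 * p + 4304)) / 4608 := by
  rw [deriv_cross_cubic_eq (G := Gb3 p) rfl]
  ring

theorem quadratic_pos_of_mem_Icc {p : ℝ} (hp : p ∈ Set.Icc (0 : ℝ) 1) :
    0 < 335 * p ^ 2 - 3424 * p + 4304 := by
  nlinarith [sq_nonneg p, hp.2]

theorem Gb3_deriv_cross_nonneg {p s : ℝ} (hp : p ∈ Set.Icc (0 : ℝ) 1)
    (hs : s ∈ Set.Icc (0 : ℝ) 1) :
    0 ≤ deriv (Gb3 p) 1 * deriv (deriv (Gb3 p)) s - deriv (Gb3 p) s * deriv (deriv (Gb3 p)) 1 := by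
  obtain ⟨hp0, hp1⟩ := hp
  obtain ⟨hs0, hs1⟩ := hs
  have hlin : 0 ≤ 18 * p * (96 - 15 * p) * s := by
    have hp96 : 0 ≤ 96 - 15 * p := by linarith
    positivity
  have hQ := quadratic_pos_of_mem_Icc ⟨hp0, hp1⟩
  rw [Gb3_deriv_cross_eq]
  have h1s : 0 ≤ 1 - s := by linarith
  positivity

theorem stmt17 :
    (∀ p ∈ Set.Icc (0 : ℝ) 1, 0 < 335 * p ^ 2 - 3424 * p + 4304) ∧
      (∀ p ∈ Set.Icc (0 : ℝ) 1, ∀ s ∈ Set.Icc (0 : ℝ) 1,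
        0 < 335 * p ^ 2 - 3424 * p + 4304 →
          0 ≤ deriv (Gb3 p) 1 * deriv (deriv (Gb3 p)) s - deriv (Gb3 p) s * deriv (deriv (Gb3 p)) 1) ∧
      ∀ p ∈ Set.Icc (0 : ℝ) 1, ∀ s ∈ Set.Icc (0 : ℝ) 1,
        0 ≤ deriv (Gb3 p) 1 * deriv (deriv (Gb3 p)) s - deriv (Gb3 p) s * deriv (deriv (Gb3 p)) 1 :=
  ⟨fun _ hp => quadratic_pos_of_mem_Icc hp, fun _ hp _ hs _ => Gb3_deriv_cross_nonneg hp hs,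
    fun _ hp _ hs => Gb3_deriv_cross_nonneg hp hs⟩
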